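/- With |Ψ⟩ = (U_{BA} ⊗ I_{ĀB̄})(|EPR⟩_{BB̄} ⊗ |EPR⟩_{AĀ}) and the backward state |Φ_back⟩ obtained by swapping D to an ancilla D′, inserting |EPR⟩ on D̄D, and applying U† on DC, the probability of finding EPR pairs simultaneously on AĀ and on D′D̄ equals exactly 1/d_D²: ⟨Φ_back| Π^{EPR}_{AĀ} Π^{EPR}_{D′D̄} |Φ_back⟩ = 1/d_D², for any unitary U. -/
import Mathlib


open Matrix Kronecker

private lemma sum_if_const_aux {α : Type*} [Fintype α] (c : Prop) [Decidable c] (f : α → ℂ) :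
    (∑ x, if c then f x else 0) = if c then ∑ x, f x else 0 := by
  split <;> simp

private lemma star_if_aux (c : Prop) [Decidable c] (r : ℝ) :
    star (if c then ((r : ℂ))⁻¹ else 0) = if c then ((r : ℂ))⁻¹ else 0 := by
  split <;> simp [Complex.star_def, Complex.conj_ofReal]

/-- The maximally entangled (EPR) state `(1/√d) ∑ⱼ |j⟩⊗|j⟩` on `ℂ^d ⊗ ℂ^d`. -/
noncomputable def epr (d : ℕ) : Fin d × Fin d → ℂ :=
  fun p => if p.1 = p.2 then ((Real.sqrt d : ℂ))⁻¹ else 0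

/-- The rank-one projector `|EPR⟩⟨EPR|`. -/
noncomputable def eprProj (d : ℕ) : Matrix (Fin d × Fin d) (Fin d × Fin d) ℂ :=
  Matrix.of fun p q => epr d p * star (epr d q)

/-- `⟨Φ_back| Π^{EPR}_{AĀ} Π^{EPR}_{D′D̄} |Φ_back⟩ = 1/d_D²` for any unitary `U`.
Registers of `|Φ_back⟩` are ordered as `((B,A), D′, D̄, Ā, B̄)`. -/
theorem stmt_13 (dB dA dC dD : ℕ) (hB : 0 < dB) (hA : 0 < dA)
    (hC : 0 < dC) (hD : 0 < dD) (hdim : dC * dD = dB * dA)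
    (U : Matrix (Fin dC × Fin dD) (Fin dB × Fin dA) ℂ)
    (hU : U * Uᴴ = 1) (hU2 : Uᴴ * U = 1) :
    -- initial state |EPR⟩_{BB̄} ⊗ |EPR⟩_{AĀ} on registers ((B,A),(Ā,B̄))
    let Φ0 : (Fin dB × Fin dA) × (Fin dA × Fin dB) → ℂ := fun x =>
      (if x.1.1 = x.2.2 then ((Real.sqrt dB : ℂ))⁻¹ else 0) *
        (if x.1.2 = x.2.1 then ((Real.sqrt dA : ℂ))⁻¹ else 0)
    -- state after applying U, on registers ((C,D),(Ā,B̄))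
    let Ψ1 : (Fin dC × Fin dD) × (Fin dA × Fin dB) → ℂ :=
      (U ⊗ₖ (1 : Matrix (Fin dA × Fin dB) (Fin dA × Fin dB) ℂ)).mulVec Φ0
    -- relabel D as D′, adjoin |EPR⟩_{D̄D}, apply U† on (C, D): registers ((B,A), D′, D̄, Ā, B̄)
    let Φback : (Fin dB × Fin dA) × Fin dD × Fin dD × Fin dA × Fin dB → ℂ :=
      fun p => ∑ cd : Fin dC × Fin dD,
        Uᴴ p.1 cd * (Ψ1 ((cd.1, p.2.1), (p.2.2.2.1, p.2.2.2.2)) *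
          epr dD (p.2.2.1, cd.2))
    -- projector Π^{EPR}_{AĀ} Π^{EPR}_{D′D̄} on the full register space
    let P : Matrix ((Fin dB × Fin dA) × Fin dD × Fin dD × Fin dA × Fin dB)
        ((Fin dB × Fin dA) × Fin dD × Fin dD × Fin dA × Fin dB) ℂ :=
      Matrix.of fun p q =>
        eprProj dA ((p.1.2, p.2.2.2.1)) ((q.1.2, q.2.2.2.1)) *
          eprProj dD ((p.2.1, p.2.2.1)) ((q.2.1, q.2.2.1)) *
          (if p.1.1 = q.1.1 ∧ p.2.2.2.2 = q.2.2.2.2 then 1 else 0)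
    (∑ p, star (Φback p) * (P.mulVec Φback p)) = (((dD : ℂ)) ^ 2)⁻¹ := by
  intro Φ0 Ψ1 Φback P
  set sB : ℂ := ((Real.sqrt dB : ℂ))⁻¹ with hsB
  set sA : ℂ := ((Real.sqrt dA : ℂ))⁻¹ with hsA
  set sD : ℂ := ((Real.sqrt dD : ℂ))⁻¹ with hsD
  have hΨ : ∀ (c : Fin dC) (d : Fin dD) (a2 : Fin dA) (b2 : Fin dB),
      Ψ1 ((c, d), (a2, b2)) = sB * sA * U (c, d) (b2, a2) := by
    intro c d a2 b2
    simp only [Ψ1, Φ0, Matrix.mulVec, dotProduct, Matrix.kroneckerMap_apply,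
      Matrix.one_apply]
    rw [Fintype.sum_prod_type]
    simp only [mul_ite, ite_mul, mul_zero, zero_mul, mul_one, one_mul]
    rw [Finset.sum_comm]
    simp [Finset.sum_ite_eq, Fintype.sum_prod_type, Prod.ext_iff, ite_and]
    ring
  have hΦ : ∀ (b : Fin dB) (a : Fin dA) (d' dd : Fin dD) (a2 : Fin dA) (b2 : Fin dB),
      Φback ((b, a), (d', dd, a2, b2)) =
        sB * sA * sD * ∑ c : Fin dC, star (U (c, dd) (b, a)) * U (c, d') (b2, a2) := by
    intro b a d' dd a2 b2
    simp only [Φback, Matrix.conjTranspose_apply, epr]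
    rw [Fintype.sum_prod_type]
    simp only [hΨ, mul_ite, ite_mul, mul_zero, zero_mul, Finset.sum_ite_eq,
      Finset.mem_univ, if_true, Finset.mul_sum]
    apply Finset.sum_congr rfl
    intro c _
    ring
  have hUU : ∀ (b : Fin dB) (a : Fin dA) (b2 : Fin dB),
      (∑ cd : Fin dC × Fin dD, star (U cd (b, a)) * U cd (b2, a)) =
        if b = b2 then 1 else 0 := by
    intro b a b2
    have h : (Uᴴ * U) (b, a) (b2, a) = (1 : Matrix (Fin dB × Fin dA) (Fin dB × Fin dA) ℂ) (b, a) (b2, a) := by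
      rw [hU2]
    simpa [Matrix.mul_apply, Matrix.conjTranspose_apply, Matrix.one_apply,
      Prod.ext_iff] using h
  have hS : ∀ (b b2 : Fin dB),
      (∑ a : Fin dA, ∑ d : Fin dD, Φback ((b, a), (d, d, a, b2))) =
        sB * sA * sD * (dA : ℂ) * (if b = b2 then 1 else 0) := by
    intro b b2
    simp only [hΦ, ← Finset.mul_sum]
    have h1 : ∀ a : Fin dA,
        (∑ d : Fin dD, ∑ c : Fin dC, star (U (c, d) (b, a)) * U (c, d) (b2, a)) =
          if b = b2 then 1 else 0 := by
      intro a
      rw [Finset.sum_comm, ← hUU b a b2, Fintype.sum_prod_type]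
    rw [Finset.sum_congr rfl fun a _ => h1 a, Finset.sum_const, Finset.card_univ,
      Fintype.card_fin, nsmul_eq_mul]
    ring
  simp only [Matrix.mulVec, dotProduct, P, Matrix.of_apply, eprProj, epr]
  simp only [Fintype.sum_prod_type, star_if_aux, mul_ite, ite_mul, zero_mul,
    mul_zero, one_mul, mul_one, ite_and, sum_if_const_aux, Finset.sum_ite_eq,
    Finset.sum_ite_eq', Finset.mem_univ, if_true]
  simp only [← hsA, ← hsB, ← hsD]
  have hg : ∀ (b b2 : Fin dB),
      (∑ x4 : Fin dA, ∑ x5 : Fin dD, sA * sA * (sD * sD) * Φback ((b, x4), (x5, x5, x4, b2))) =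
        sA * sA * (sD * sD) * (sB * sA * sD * (dA : ℂ) * (if b = b2 then 1 else 0)) := by
    intro b b2
    simp only [← Finset.mul_sum]
    rw [hS]
  simp only [hg]
  simp only [mul_ite, mul_zero, mul_one, Finset.sum_ite_eq, Finset.mem_univ, if_true]
  have h3 : ∀ x : Fin dB,
      (∑ x1 : Fin dA, ∑ x2 : Fin dD,
          star (Φback ((x, x1), (x2, x2, x1, x))) * (sA * sA * (sD * sD) * (sB * sA * sD * (dA : ℂ)))) =
        star (sB * sA * sD * (dA : ℂ)) * (sA * sA * (sD * sD) * (sB * sA * sD * (dA : ℂ))) := by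
    intro x
    simp only [← Finset.sum_mul, ← star_sum]
    rw [hS]
    simp
  simp only [h3, Finset.sum_const, Finset.card_univ, Fintype.card_fin, nsmul_eq_mul]
  -- numeric finish
  have hstar : star (sB * sA * sD * (dA : ℂ)) = sB * sA * sD * (dA : ℂ) := by
    simp [hsA, hsB, hsD, Complex.star_def, Complex.conj_ofReal, _root_.map_mul]
  rw [hstar]
  have hA2 : sA * sA = ((dA : ℂ))⁻¹ := by
    rw [hsA, ← mul_inv, ← Complex.ofReal_mul, Real.mul_self_sqrt (Nat.cast_nonneg dA)]
    norm_num
  have hB2 : sB * sB = ((dB : ℂ))⁻¹ := by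
    rw [hsB, ← mul_inv, ← Complex.ofReal_mul, Real.mul_self_sqrt (Nat.cast_nonneg dB)]
    norm_num
  have hD2 : sD * sD = ((dD : ℂ))⁻¹ := by
    rw [hsD, ← mul_inv, ← Complex.ofReal_mul, Real.mul_self_sqrt (Nat.cast_nonneg dD)]
    norm_num
  have hAne : (dA : ℂ) ≠ 0 := Nat.cast_ne_zero.2 hA.ne'
  have hBne : (dB : ℂ) ≠ 0 := Nat.cast_ne_zero.2 hB.ne'
  have hDne : (dD : ℂ) ≠ 0 := Nat.cast_ne_zero.2 hD.ne'
  have e : (dB : ℂ) * (sB * sA * sD * (dA : ℂ) * (sA * sA * (sD * sD) * (sB * sA * sD * (dA : ℂ)))) =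
      ((dB : ℂ) * (sB * sB)) * (((dA : ℂ) * (sA * sA)) * ((dA : ℂ) * (sA * sA))) *
        ((sD * sD) * (sD * sD)) := by ring
  rw [e, hA2, hB2, hD2, mul_inv_cancel₀ hAne, mul_inv_cancel₀ hBne]
  rw [← mul_inv, sq]
  ring
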